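/- arXiv:math-ph/0204030 — 3 statements merged into one kernel-verified Lean document; each statement's English description precedes it below -/
import Mathlib

section
/- For every M > 0 and every s ∈ (0,1] there exists a constant c > 0, depending only on M and s, with the following property: for every interval J ⊆ ℝ, every measurable potential V : ℝ → ℝ, every E ∈ ℝ such that |V(x) − E| ≤ M for almost every x ∈ J, every twice continuously differentiable function ψ : ℝ → ℂ satisfying the eigenvalue equation −ψ''(x) + V(x)ψ(x) = E ψ(x) for all x ∈ J, and every k ∈ ℝ with [k − 1/2, k + 1/2] ⊆ J, one has ∫_{k−s/2}^{k+s/2} |ψ(x)|² dx ≥ c ∫_{k−1/2}^{k+1/2} |ψ(x)|² dx. -/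
/-!
Where `‖ψ''‖ ≤ M‖ψ‖`, the energy `u = ‖ψ‖² + ‖ψ'‖²` satisfies `|u'| ≤ (1 + M) u`, so it changes by
at most a factor `K = exp ((1 + M) / 2)` on `[k - 1/2, k + 1/2]`; in particular the mass of `ψ`
there is at most `K u(k)`. On a short interval `[k, k + T]`, Taylor's formula gives
`ψ (k + h) = ψ k + h ψ' k + O(M √(K u(k)) T²)`, while `∫₀ᵀ ‖ψ k + h ψ' k‖² dh ≳ T³ u(k)` because a
linear function cannot be small on a whole interval together with its slope. For
`T ≈ s / ((1 + M) K)` the Taylor error is negligible, and the mass on `[k, k + T]` is `≳ T³ u(k)`.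
-/

open MeasureTheory Set Real
open scoped RealInnerProductSpace

theorem le_on_Icc_of_ae_le {f g : ℝ → ℝ} (hf : Continuous f) (hg : Continuous g) {a b : ℝ}
    (hab : a ≠ b) (h : ∀ᵐ x ∂volume.restrict (Icc a b), f x ≤ g x) :
    ∀ x ∈ Icc a b, f x ≤ g x := by
  have hmin := Measure.eqOn_Icc_of_ae_eq volume hab (h.mono fun x hx => min_eq_left hx)
    (hf.min hg).continuousOn hf.continuousOn
  intro x hx
  rw [← hmin hx]
  exact min_le_right _ _

theorem antitoneOn_exp_neg_mul_mul {u u' : ℝ → ℝ} {L a b : ℝ}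
    (hu : ∀ x, HasDerivAt u (u' x) x) (h : ∀ x ∈ Icc a b, u' x ≤ L * u x) :
    AntitoneOn (fun x => exp (-(L * x)) * u x) (Icc a b) := by
  have hd : ∀ x, HasDerivAt (fun x => exp (-(L * x)) * u x)
      (exp (-(L * x)) * (u' x - L * u x)) x := fun x => by
    refine HasDerivAt.congr_deriv ((((hasDerivAt_id' x).const_mul L).neg.exp).mul (hu x)) ?_
    simp only [Pi.neg_apply]
    ring
  refine antitoneOn_of_hasDerivWithinAt_nonpos (convex_Icc a b)
    (fun x _ => (hd x).continuousAt.continuousWithinAt) (fun x _ => (hd x).hasDerivWithinAt)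
    fun x hx => ?_
  rw [interior_Icc] at hx
  exact mul_nonpos_of_nonneg_of_nonpos (exp_pos _).le
    (sub_nonpos.2 (h x (Ioo_subset_Icc_self hx)))

theorem le_exp_mul_abs_sub_mul_of_abs_deriv_le {u u' : ℝ → ℝ} {L a b : ℝ}
    (hu : ∀ x, HasDerivAt u (u' x) x) (h : ∀ x ∈ Icc a b, |u' x| ≤ L * u x)
    {x y : ℝ} (hx : x ∈ Icc a b) (hy : y ∈ Icc a b) : u y ≤ exp (L * |y - x|) * u x := by
  rcases le_total x y with hxy | hyx
  · have hanti := antitoneOn_exp_neg_mul_mul hu (fun t ht => (le_abs_self _).trans (h t ht))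
      hx hy hxy
    calc u y = exp (L * y) * (exp (-(L * y)) * u y) := by
          rw [← mul_assoc, ← exp_add, add_neg_cancel, exp_zero, one_mul]
      _ ≤ exp (L * y) * (exp (-(L * x)) * u x) := by gcongr
      _ = exp (L * |y - x|) * u x := by
          rw [abs_of_nonneg (sub_nonneg.2 hxy), ← mul_assoc, ← exp_add]; ring_nf
  · have hanti := antitoneOn_exp_neg_mul_mul (u := fun t => u (-t)) (u' := fun t => -u' (-t))
      (a := -b) (b := -a) (fun t => by
        refine HasDerivAt.congr_deriv ((hu (-t)).comp t (hasDerivAt_neg t)) ?_; ring)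
      (fun t ht => (neg_le_abs _).trans (h (-t) ⟨by linarith [ht.2], by linarith [ht.1]⟩))
      ⟨by linarith [hx.2], by linarith [hx.1]⟩ ⟨by linarith [hy.2], by linarith [hy.1]⟩
      (neg_le_neg hyx)
    simp only [neg_neg, mul_neg] at hanti
    calc u y = exp (-(L * y)) * (exp (L * y) * u y) := by
          rw [← mul_assoc, ← exp_add, neg_add_cancel, exp_zero, one_mul]
      _ ≤ exp (-(L * y)) * (exp (L * x) * u x) := by gcongr
      _ = exp (L * |y - x|) * u x := by
          rw [abs_of_nonpos (sub_nonpos.2 hyx), ← mul_assoc, ← exp_add]; ring_nf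

theorem norm_sq_div_two_sub_sq_le_norm_sq {E : Type*} [SeminormedAddCommGroup E] {a b : E} {R : ℝ}
    (h : ‖a - b‖ ≤ R) :
    ‖a‖ ^ 2 / 2 - R ^ 2 ≤ ‖b‖ ^ 2 := by
  have htri : ‖a‖ ≤ ‖b‖ + R := by linarith [norm_le_norm_add_norm_sub' a b]
  nlinarith [norm_nonneg a, norm_nonneg (a - b), sq_nonneg (‖b‖ - R)]

theorem norm_sub_sub_smul_le {E : Type*} [NormedAddCommGroup E] [NormedSpace ℝ E]
    {ψ ψ' ψ'' : ℝ → E} {C a b : ℝ}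
    (hψ : ∀ x, HasDerivAt ψ (ψ' x) x) (hψ' : ∀ x, HasDerivAt ψ' (ψ'' x) x)
    (hC : ∀ x ∈ Icc a b, ‖ψ'' x‖ ≤ C) {x : ℝ} (hx : x ∈ Icc a b) :
    ‖ψ x - ψ a - (x - a) • ψ' a‖ ≤ C * (x - a) ^ 2 := by
  have hC0 : 0 ≤ C := (norm_nonneg _).trans (hC a ⟨le_rfl, hx.1.trans hx.2⟩)
  have hψ'_lip : ∀ t ∈ Icc a x, ‖ψ' t - ψ' a‖ ≤ C * (x - a) := fun t ht =>
    (norm_image_sub_le_of_norm_deriv_le_segment' (fun t _ => (hψ' t).hasDerivWithinAt)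
      (fun t ht' => hC t ⟨ht'.1, ht'.2.le.trans hx.2⟩) t ht).trans (by gcongr; exact ht.2)
  have hrem := norm_image_sub_le_of_norm_deriv_le_segment' (f := ψ - fun t => t • ψ' a)
    (fun t _ => by
      simpa only [one_smul] using
        ((hψ t).sub ((hasDerivAt_id' t).smul_const (ψ' a))).hasDerivWithinAt)
    (fun t ht => hψ'_lip t (Ico_subset_Icc_self ht)) x ⟨hx.1, le_rfl⟩
  convert hrem using 1
  · rw [Pi.sub_apply, Pi.sub_apply, sub_smul]; congr 1; abel
  · ring

section InnerProductSpace

variable {F : Type*} [NormedAddCommGroup F] [InnerProductSpace ℝ F]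

theorem abs_two_inner_add_two_inner_le {M : ℝ} (hM : 0 ≤ M) (p q r : F) (hr : ‖r‖ ≤ M * ‖p‖) :
    |2 * ⟪p, q⟫ + 2 * ⟪q, r⟫| ≤ (1 + M) * (‖p‖ ^ 2 + ‖q‖ ^ 2) := by
  have hpq := abs_real_inner_le_norm p q
  have hqr := abs_real_inner_le_norm q r
  have hqr' : ‖q‖ * ‖r‖ ≤ M * (‖p‖ * ‖q‖) := by
    nlinarith [mul_le_mul_of_nonneg_left hr (norm_nonneg q)]
  have hamgm : 2 * (‖p‖ * ‖q‖) ≤ ‖p‖ ^ 2 + ‖q‖ ^ 2 := by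
    nlinarith [sq_nonneg (‖p‖ - ‖q‖)]
  calc |2 * ⟪p, q⟫ + 2 * ⟪q, r⟫| ≤ 2 * |⟪p, q⟫| + 2 * |⟪q, r⟫| := by
        simpa [abs_mul] using abs_add_le (2 * ⟪p, q⟫) (2 * ⟪q, r⟫)
    _ ≤ (1 + M) * (2 * (‖p‖ * ‖q‖)) := by linarith
    _ ≤ (1 + M) * (‖p‖ ^ 2 + ‖q‖ ^ 2) := by gcongr

theorem norm_sq_add_norm_sq_le_exp_mul {ψ ψ' ψ'' : ℝ → F} {M a b : ℝ}
    (hψ : ∀ x, HasDerivAt ψ (ψ' x) x) (hψ' : ∀ x, HasDerivAt ψ' (ψ'' x) x) (hM : 0 ≤ M)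
    (hbound : ∀ x ∈ Icc a b, ‖ψ'' x‖ ≤ M * ‖ψ x‖) {x y : ℝ} (hx : x ∈ Icc a b)
    (hy : y ∈ Icc a b) :
    ‖ψ y‖ ^ 2 + ‖ψ' y‖ ^ 2 ≤ exp ((1 + M) * |y - x|) * (‖ψ x‖ ^ 2 + ‖ψ' x‖ ^ 2) :=
  le_exp_mul_abs_sub_mul_of_abs_deriv_le (fun t => (hψ t).norm_sq.add (hψ' t).norm_sq)
    (fun t ht => abs_two_inner_add_two_inner_le hM _ _ _ (hbound t ht)) hx hy

theorem integral_norm_add_smul_sq (p q : F) (T : ℝ) :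
    ∫ h in (0 : ℝ)..T, ‖p + h • q‖ ^ 2 = ‖p‖ ^ 2 * T + ⟪p, q⟫ * T ^ 2 + ‖q‖ ^ 2 * T ^ 3 / 3 := by
  have hexpand : (fun h : ℝ => ‖p + h • q‖ ^ 2) =
      fun h => ‖p‖ ^ 2 + 2 * ⟪p, q⟫ * h + ‖q‖ ^ 2 * h ^ 2 := by
    ext h
    rw [norm_add_sq_real, real_inner_smul_right, norm_smul, mul_pow, Real.norm_eq_abs, sq_abs]
    ring
  rw [hexpand, intervalIntegral.integral_add, intervalIntegral.integral_add,
    intervalIntegral.integral_const_mul, intervalIntegral.integral_const_mul]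
  · simp only [integral_id, integral_pow, intervalIntegral.integral_const, smul_eq_mul]
    ring
  all_goals exact Continuous.intervalIntegrable (by fun_prop) _ _

theorem mul_norm_sq_add_norm_sq_le_integral (p q : F) {T : ℝ} (hT0 : 0 ≤ T) (hT1 : T ≤ 1) :
    T ^ 3 / 20 * (‖p‖ ^ 2 + ‖q‖ ^ 2) ≤ ∫ h in (0 : ℝ)..T, ‖p + h • q‖ ^ 2 := by
  rw [integral_norm_add_smul_sq]
  have hinner : -(‖p‖ * ‖q‖) ≤ ⟪p, q⟫ := neg_le_of_abs_le (abs_real_inner_le_norm p q)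
  have hT2 : T ^ 2 ≤ 1 := by nlinarith
  -- after dividing by `T`, a positive definite quadratic form in `‖p‖` and `T * ‖q‖`
  have hdiv :
      T ^ 2 / 20 * (‖p‖ ^ 2 + ‖q‖ ^ 2) ≤ ‖p‖ ^ 2 + ⟪p, q⟫ * T + ‖q‖ ^ 2 * T ^ 2 / 3 := by
    nlinarith [sq_nonneg (‖q‖ * T - 30 / 17 * ‖p‖), mul_le_mul_of_nonneg_left hinner hT0,
      mul_le_mul_of_nonneg_right hT2 (sq_nonneg ‖p‖)]
  nlinarith [mul_le_mul_of_nonneg_left hdiv hT0]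

theorem mul_norm_sq_add_norm_sq_sub_le_integral_norm_sq {ψ ψ' ψ'' : ℝ → F} {C k T : ℝ}
    (hψ : ∀ x, HasDerivAt ψ (ψ' x) x) (hψ' : ∀ x, HasDerivAt ψ' (ψ'' x) x)
    (hT0 : 0 ≤ T) (hT1 : T ≤ 1) (hC : ∀ x ∈ Icc k (k + T), ‖ψ'' x‖ ≤ C) :
    T ^ 3 / 40 * (‖ψ k‖ ^ 2 + ‖ψ' k‖ ^ 2) - C ^ 2 * T ^ 5 ≤ ∫ x in k..k + T, ‖ψ x‖ ^ 2 := by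
  have hC0 : 0 ≤ C := (norm_nonneg _).trans (hC k ⟨le_rfl, by linarith⟩)
  have hψc : Continuous ψ := continuous_iff_continuousAt.2 fun x => (hψ x).continuousAt
  have hpointwise : ∀ h ∈ Icc 0 T,
      ‖ψ k + h • ψ' k‖ ^ 2 / 2 - (C * T ^ 2) ^ 2 ≤ ‖ψ (k + h)‖ ^ 2 := by
    intro h hh
    refine norm_sq_div_two_sub_sq_le_norm_sq ?_
    have htaylor := norm_sub_sub_smul_le hψ hψ' hC (x := k + h)
      ⟨by linarith [hh.1], by linarith [hh.2]⟩
    calc ‖ψ k + h • ψ' k - ψ (k + h)‖ = ‖ψ (k + h) - ψ k - (k + h - k) • ψ' k‖ := by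
          rw [← norm_neg]; congr 1; simp only [add_sub_cancel_left]; abel
      _ ≤ C * (k + h - k) ^ 2 := htaylor
      _ ≤ C * T ^ 2 := by rw [add_sub_cancel_left]; gcongr; exacts [hh.1, hh.2]
  calc T ^ 3 / 40 * (‖ψ k‖ ^ 2 + ‖ψ' k‖ ^ 2) - C ^ 2 * T ^ 5
      ≤ (∫ h in (0 : ℝ)..T, ‖ψ k + h • ψ' k‖ ^ 2) / 2 - T * (C * T ^ 2) ^ 2 := by
        linarith [mul_norm_sq_add_norm_sq_le_integral (ψ k) (ψ' k) hT0 hT1]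
    _ = ∫ h in (0 : ℝ)..T, (‖ψ k + h • ψ' k‖ ^ 2 / 2 - (C * T ^ 2) ^ 2) := by
        rw [intervalIntegral.integral_sub, intervalIntegral.integral_div,
          intervalIntegral.integral_const, smul_eq_mul, sub_zero]
        all_goals exact Continuous.intervalIntegrable (by fun_prop) _ _
    _ ≤ ∫ h in (0 : ℝ)..T, ‖ψ (k + h)‖ ^ 2 :=
        intervalIntegral.integral_mono_on hT0 (Continuous.intervalIntegrable (by fun_prop) _ _)
          (Continuous.intervalIntegrable (by fun_prop) _ _) hpointwise
    _ = ∫ x in k..k + T, ‖ψ x‖ ^ 2 := by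
        rw [intervalIntegral.integral_comp_add_left (fun x => ‖ψ x‖ ^ 2), add_zero]

theorem mul_integral_Icc_le_intervalIntegral {ψ ψ' ψ'' : ℝ → F} {M k T : ℝ}
    (hψ : ∀ x, HasDerivAt ψ (ψ' x) x) (hψ' : ∀ x, HasDerivAt ψ' (ψ'' x) x) (hM : 0 ≤ M)
    (hbound : ∀ x ∈ Icc (k - 1 / 2) (k + 1 / 2), ‖ψ'' x‖ ≤ M * ‖ψ x‖)
    (hT0 : 0 ≤ T) (hT : T ≤ 1 / 2) (hTM : M ^ 2 * exp ((1 + M) / 2) * T ^ 2 ≤ 1 / 80) :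
    T ^ 3 / (80 * exp ((1 + M) / 2)) * ∫ x in Icc (k - 1 / 2) (k + 1 / 2), ‖ψ x‖ ^ 2
      ≤ ∫ x in k..k + T, ‖ψ x‖ ^ 2 := by
  set K := exp ((1 + M) / 2)
  set u₀ := ‖ψ k‖ ^ 2 + ‖ψ' k‖ ^ 2
  have hK : 0 < K := exp_pos _
  have hk : k ∈ Icc (k - 1 / 2) (k + 1 / 2) := ⟨by linarith, by linarith⟩
  have hsq : ∀ x ∈ Icc (k - 1 / 2) (k + 1 / 2), ‖ψ x‖ ^ 2 ≤ K * u₀ := fun x hx => by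
    have hdist : (1 + M) * |x - k| ≤ (1 + M) / 2 := by
      rw [mul_comm, ← le_div_iff₀ (by linarith), div_div_cancel_left' (by linarith), abs_le]
      constructor <;> linarith [hx.1, hx.2]
    calc ‖ψ x‖ ^ 2 ≤ ‖ψ x‖ ^ 2 + ‖ψ' x‖ ^ 2 := le_add_of_nonneg_right (sq_nonneg _)
      _ ≤ exp ((1 + M) * |x - k|) * u₀ := norm_sq_add_norm_sq_le_exp_mul hψ hψ' hM hbound hk hx
      _ ≤ K * u₀ := mul_le_mul_of_nonneg_right (exp_le_exp.2 hdist) (by positivity)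
  have hupper : ∫ x in Icc (k - 1 / 2) (k + 1 / 2), ‖ψ x‖ ^ 2 ≤ K * u₀ := by
    have := norm_setIntegral_le_of_norm_le_const (μ := volume) (f := fun x => ‖ψ x‖ ^ 2)
      measure_Icc_lt_top
      (fun x hx => by rw [norm_pow, norm_norm]; exact hsq x hx)
    rw [Real.volume_real_Icc_of_le (by linarith), show k + 1 / 2 - (k - 1 / 2) = 1 by ring,
      mul_one] at this
    exact (le_abs_self _).trans this
  have hC : ∀ x ∈ Icc k (k + T), ‖ψ'' x‖ ≤ M * √(K * u₀) := fun x hx => by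
    have hxI : x ∈ Icc (k - 1 / 2) (k + 1 / 2) := ⟨by linarith [hx.1], by linarith [hx.2]⟩
    refine (hbound x hxI).trans (mul_le_mul_of_nonneg_left ?_ hM)
    simpa using abs_le_sqrt (hsq x hxI)
  have hlower := mul_norm_sq_add_norm_sq_sub_le_integral_norm_sq hψ hψ' hT0 (by linarith) hC
  rw [mul_pow, sq_sqrt (by positivity)] at hlower
  have hu₀ : 0 ≤ u₀ := by positivity
  calc T ^ 3 / (80 * K) * ∫ x in Icc (k - 1 / 2) (k + 1 / 2), ‖ψ x‖ ^ 2
      ≤ T ^ 3 / (80 * K) * (K * u₀) := by gcongr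
    _ = T ^ 3 / 40 * u₀ - T ^ 3 / 80 * u₀ := by field_simp; ring
    _ ≤ T ^ 3 / 40 * u₀ - M ^ 2 * (K * u₀) * T ^ 5 := by
        nlinarith [mul_le_mul_of_nonneg_right hTM (mul_nonneg (pow_nonneg hT0 3) hu₀)]
    _ ≤ ∫ x in k..k + T, ‖ψ x‖ ^ 2 := hlower

end InnerProductSpace

theorem norm_deriv_deriv_le_of_schrodinger {ψ : ℝ → ℂ} (hψ : ContDiff ℝ 2 ψ) {J : Set ℝ}
    {V : ℝ → ℝ} {E M a b : ℝ} (hab : a < b) (hsub : Icc a b ⊆ J)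
    (hVE : ∀ᵐ x ∂volume.restrict J, |V x - E| ≤ M)
    (heig : ∀ x ∈ J, -(deriv (deriv ψ) x) + (V x : ℂ) * ψ x = (E : ℂ) * ψ x) :
    ∀ x ∈ Icc a b, ‖deriv (deriv ψ) x‖ ≤ M * ‖ψ x‖ := by
  refine le_on_Icc_of_ae_le (by fun_prop) (by fun_prop) hab.ne ?_
  filter_upwards [ae_restrict_of_ae_restrict_of_subset hsub hVE,
    ae_restrict_mem measurableSet_Icc] with x hVx hx
  have hψ'' : deriv (deriv ψ) x = ((V x - E : ℝ) : ℂ) * ψ x := by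
    push_cast
    linear_combination -heig x (hsub hx)
  rw [hψ'', norm_mul, Complex.norm_real, Real.norm_eq_abs]
  gcongr

/-- Quantitative unique continuation: for every `M > 0` and `s ∈ (0,1]` there is `c > 0`
(depending only on `M` and `s`) such that for any interval `J`, any measurable potential `V`,
any energy `E` with `|V - E| ≤ M` a.e. on `J`, any `C²` eigenfunction `ψ` of `-ψ'' + Vψ = Eψ`
on `J`, and any `k` with `[k - 1/2, k + 1/2] ⊆ J`, the `L²` mass of `ψ` on `[k - s/2, k + s/2]`
dominates `c` times its mass on `[k - 1/2, k + 1/2]`. -/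
theorem unique_continuation_local
    (M : ℝ) (hM : 0 < M) (s : ℝ) (hs : s ∈ Set.Ioc (0 : ℝ) 1) :
    ∃ c : ℝ, 0 < c ∧
      ∀ (J : Set ℝ), J.OrdConnected →
      ∀ (V : ℝ → ℝ), Measurable V →
      ∀ (E : ℝ), (∀ᵐ x ∂(volume.restrict J), |V x - E| ≤ M) →
      ∀ (ψ : ℝ → ℂ), ContDiff ℝ 2 ψ →
      (∀ x ∈ J, -(deriv (deriv ψ) x) + (V x : ℂ) * ψ x = (E : ℂ) * ψ x) →
      ∀ (k : ℝ), Set.Icc (k - 1/2) (k + 1/2) ⊆ J →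
      c * ∫ x in Set.Icc (k - 1/2) (k + 1/2), ‖ψ x‖ ^ 2
        ≤ ∫ x in Set.Icc (k - s/2) (k + s/2), ‖ψ x‖ ^ 2 := by
  obtain ⟨hs0, hs1⟩ := hs
  set K := exp ((1 + M) / 2)
  set T := s / (9 * (1 + M) * K)
  have hK : 1 ≤ K := one_le_exp (by linarith)
  have hT0 : 0 < T := by positivity
  have hKT : (1 + M) * K * T = s / 9 := by
    simp only [T]
    field_simp [(exp_pos _).ne']
  have hTs : T ≤ s / 2 := by nlinarith [mul_le_mul_of_nonneg_right hK hT0.le]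
  have hTM : M ^ 2 * K * T ^ 2 ≤ 1 / 80 :=
    calc M ^ 2 * K * T ^ 2 ≤ (1 + M) ^ 2 * K ^ 2 * T ^ 2 := by
          gcongr
          · nlinarith
          · nlinarith
      _ = (s / 9) ^ 2 := by rw [← hKT]; ring
      _ ≤ 1 / 80 := by nlinarith
  refine ⟨T ^ 3 / (80 * K), by positivity, fun J _ V _ E hVE ψ hψ heig k hkJ => ?_⟩
  have hψ' : ∀ x, HasDerivAt ψ (deriv ψ x) x := fun x =>
    ((hψ.differentiable (by norm_num)) x).hasDerivAt
  have hψ'' : ∀ x, HasDerivAt (deriv ψ) (deriv (deriv ψ) x) x := fun x =>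
    (hψ.differentiable_deriv_two x).hasDerivAt
  have hbound := norm_deriv_deriv_le_of_schrodinger hψ (by linarith) hkJ hVE heig
  calc T ^ 3 / (80 * K) * ∫ x in Icc (k - 1 / 2) (k + 1 / 2), ‖ψ x‖ ^ 2
      ≤ ∫ x in k..k + T, ‖ψ x‖ ^ 2 :=
        mul_integral_Icc_le_intervalIntegral hψ' hψ'' hM.le hbound hT0.le (by linarith) hTM
    _ ≤ ∫ x in Icc (k - s / 2) (k + s / 2), ‖ψ x‖ ^ 2 := by
        rw [intervalIntegral.integral_of_le (by linarith), ← integral_Icc_eq_integral_Ioc]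
        exact setIntegral_mono_set (Continuous.integrableOn_Icc (by fun_prop))
          (ae_of_all _ fun x => sq_nonneg _)
          (Icc_subset_Icc (by linarith) (by linarith)).eventuallyLE
end

section
/- Let ψ : ℝ → ℂ be continuously differentiable, let a < b be real numbers, and define φ(y) := ∫_{a+y}^{b+y} |ψ(x)|² dx. Then φ is differentiable on ℝ and for every y ∈ ℝ one has |φ'(y)| ≤ 2 ‖ψ‖_{L²([a+y, b+y])} · ‖ψ'‖_{L²([a+y, b+y])}. -/
/-!
Since `φ(y) = ∫_{a+y}^{b+y} ‖ψ‖²`, the fundamental theorem of calculus gives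
`φ'(y) = ‖ψ(b+y)‖² - ‖ψ(a+y)‖²`. Applying it once more, now to `‖ψ‖²` whose derivative is
`2⟪ψ, ψ'⟫`, this difference is `∫_{a+y}^{b+y} 2⟪ψ, ψ'⟫`, which Cauchy–Schwarz, first pointwise
and then in `L²([a+y, b+y])`, bounds by `2 ‖ψ‖_{L²} ‖ψ'‖_{L²}`.
-/

open MeasureTheory Set

theorem integral_mul_le_sqrt_integral_sq_mul_sqrt_integral_sq {α : Type*} [MeasurableSpace α]
    {μ : Measure α} {f g : α → ℝ} (hf₀ : 0 ≤ᵐ[μ] f) (hg₀ : 0 ≤ᵐ[μ] g) (hf : MemLp f 2 μ)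
    (hg : MemLp g 2 μ) :
    ∫ x, f x * g x ∂μ ≤ √(∫ x, f x ^ 2 ∂μ) * √(∫ x, g x ^ 2 ∂μ) := by
  have h := integral_mul_le_Lp_mul_Lq_of_nonneg Real.HolderConjugate.two_two hf₀ hg₀
    (by simpa using hf) (by simpa using hg)
  simpa only [Real.rpow_two, ← Real.sqrt_eq_rpow] using h

theorem Continuous.memLp_two_restrict_Icc {f : ℝ → ℝ} (hf : Continuous f) (c d : ℝ) :
    MemLp f 2 (volume.restrict (Icc c d)) :=
  (memLp_two_iff_integrable_sq hf.aestronglyMeasurable).2 (hf.pow 2).integrableOn_Icc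

theorem hasDerivAt_integral_Icc_add {E : Type*} [NormedAddCommGroup E] [NormedSpace ℝ E]
    [CompleteSpace E] {g : ℝ → E} (hg : Continuous g) {a b : ℝ} (hab : a ≤ b) (y : ℝ) :
    HasDerivAt (fun y => ∫ x in Icc (a + y) (b + y), g x) (g (b + y) - g (a + y)) y := by
  have hprimitive : ∀ u, HasDerivAt (fun u => ∫ x in (0 : ℝ)..u, g x) (g u) u := fun u =>
    (hg.integral_hasStrictDerivAt 0 u).hasDerivAt
  have hdiff : (fun y => ∫ x in Icc (a + y) (b + y), g x) =
      fun y => (∫ x in (0 : ℝ)..(b + y), g x) - ∫ x in (0 : ℝ)..(a + y), g x := by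
    funext y
    rw [intervalIntegral.integral_interval_sub_left (hg.intervalIntegrable _ _)
        (hg.intervalIntegrable _ _), intervalIntegral.integral_of_le (by linarith),
      integral_Icc_eq_integral_Ioc]
  rw [hdiff]
  exact ((hprimitive _).comp_const_add b y).sub ((hprimitive _).comp_const_add a y)

section InnerProductSpace

variable {F : Type*} [NormedAddCommGroup F] [InnerProductSpace ℝ F] {ψ : ℝ → F}

theorem norm_sq_sub_norm_sq_eq_integral_inner_deriv (hψ : ContDiff ℝ 1 ψ) {c d : ℝ}
    (hcd : c ≤ d) :
    ‖ψ d‖ ^ 2 - ‖ψ c‖ ^ 2 = ∫ x in Icc c d, 2 * inner ℝ (ψ x) (deriv ψ x) := by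
  have hderiv : ∀ x, HasDerivAt (fun t => ‖ψ t‖ ^ 2) (2 * inner ℝ (ψ x) (deriv ψ x)) x :=
    fun x => ((hψ.differentiable one_ne_zero) x).hasDerivAt.norm_sq
  have hcont : Continuous fun x => 2 * inner ℝ (ψ x) (deriv ψ x) := by
    have := hψ.continuous_deriv le_rfl
    have := hψ.continuous
    fun_prop
  rw [integral_Icc_eq_integral_Ioc, ← intervalIntegral.integral_of_le hcd,
    intervalIntegral.integral_eq_sub_of_hasDerivAt (fun x _ => hderiv x)
      (hcont.intervalIntegrable c d)]

theorem abs_norm_sq_sub_norm_sq_le (hψ : ContDiff ℝ 1 ψ) {c d : ℝ} (hcd : c ≤ d) :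
    |‖ψ d‖ ^ 2 - ‖ψ c‖ ^ 2| ≤
      2 * √(∫ x in Icc c d, ‖ψ x‖ ^ 2) * √(∫ x in Icc c d, ‖deriv ψ x‖ ^ 2) := by
  have hψc : Continuous fun x => ‖ψ x‖ := hψ.continuous.norm
  have hψ'c : Continuous fun x => ‖deriv ψ x‖ := (hψ.continuous_deriv le_rfl).norm
  rw [norm_sq_sub_norm_sq_eq_integral_inner_deriv hψ hcd]
  calc |∫ x in Icc c d, 2 * inner ℝ (ψ x) (deriv ψ x)|
      ≤ ∫ x in Icc c d, |2 * inner ℝ (ψ x) (deriv ψ x)| := abs_integral_le_integral_abs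
    _ ≤ ∫ x in Icc c d, 2 * (‖ψ x‖ * ‖deriv ψ x‖) := by
        refine integral_mono_of_nonneg (ae_of_all _ fun x => abs_nonneg _)
          ((continuous_const.mul (hψc.mul hψ'c)).integrableOn_Icc) (ae_of_all _ fun x => ?_)
        simp only [abs_mul, abs_two]
        gcongr
        exact abs_real_inner_le_norm _ _
    _ = 2 * ∫ x in Icc c d, ‖ψ x‖ * ‖deriv ψ x‖ := integral_const_mul 2 _
    _ ≤ 2 * (√(∫ x in Icc c d, ‖ψ x‖ ^ 2) * √(∫ x in Icc c d, ‖deriv ψ x‖ ^ 2)) := by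
        gcongr
        exact integral_mul_le_sqrt_integral_sq_mul_sqrt_integral_sq
          (ae_of_all _ fun x => norm_nonneg _) (ae_of_all _ fun x => norm_nonneg _)
          (hψc.memLp_two_restrict_Icc c d) (hψ'c.memLp_two_restrict_Icc c d)
    _ = _ := (mul_assoc _ _ _).symm

end InnerProductSpace

/-- Derivative of the translated `L²` mass: if `ψ` is `C¹` and
`φ(y) = ∫_{a+y}^{b+y} |ψ|²`, then `φ` is differentiable and
`|φ'(y)| ≤ 2 ‖ψ‖_{L²([a+y,b+y])} ‖ψ'‖_{L²([a+y,b+y])}`. -/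
theorem deriv_translated_mass
    (ψ : ℝ → ℂ) (hψ : ContDiff ℝ 1 ψ) (a b : ℝ) (hab : a < b)
    (φ : ℝ → ℝ) (hφ : ∀ y, φ y = ∫ x in Set.Icc (a + y) (b + y), ‖ψ x‖ ^ 2) :
    Differentiable ℝ φ ∧
      ∀ y, |deriv φ y| ≤
        2 * Real.sqrt (∫ x in Set.Icc (a + y) (b + y), ‖ψ x‖ ^ 2)
          * Real.sqrt (∫ x in Set.Icc (a + y) (b + y), ‖deriv ψ x‖ ^ 2) := by
  have hmass : ∀ y, HasDerivAt φ (‖ψ (b + y)‖ ^ 2 - ‖ψ (a + y)‖ ^ 2) y := fun y => by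
    rw [funext hφ]
    exact hasDerivAt_integral_Icc_add (hψ.continuous.norm.pow 2) hab.le y
  refine ⟨fun y => (hmass y).differentiableAt, fun y => ?_⟩
  rw [(hmass y).deriv]
  exact abs_norm_sq_sub_norm_sq_le hψ (by linarith)
end

section
/- For every M > 0 and every s ∈ (0,1] there exists a constant C₆ > 0, depending only on M and s, with the following property: let J ⊆ ℝ be an interval, V : ℝ → ℝ measurable, E ∈ ℝ with |V(x) − E| ≤ M for almost every x ∈ J, and let ψ : ℝ → ℂ be twice continuously differentiable and satisfy −ψ'' + Vψ = Eψ on J. Fix k ∈ ℝ and define φ(y) := ∫_{k+y−s/2}^{k+y+s/2} |ψ(x)|² dx. Then for every y ∈ ℝ such that [k+y−s/2, k+y+s/2] ⊆ J one has |φ'(y)| ≤ C₆ φ(y); consequently if [k+y'−s/2, k+y'+s/2] ⊆ J for all y' between 0 and y, then φ(y) ≤ e^{C₆ |y|} φ(0). -/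
/-!
Integrating the first-order Taylor expansion of `ψ` around `p ∈ [a, b]` against the weight
`6 (t - a) (b - t) / (b - a)³` and moving the derivative off `ψ'` by parts expresses `ψ p`
through `ψ` and `ψ''` on `[a, b]` alone, giving `‖ψ p‖ ≤ 9/(b-a) ∫‖ψ‖ + (b-a) ∫‖ψ''‖`.
For an eigenfunction `‖ψ''‖ ≤ M ‖ψ‖`, so by Cauchy–Schwarz `‖ψ p‖² ≤ C₆ ∫_{[a,b]} ‖ψ‖²`.
As `φ'(y)` is the difference of `‖ψ‖²` at the two ends of the window, `|φ'| ≤ C₆ φ`, and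
Gronwall's inequality, run backwards for `y < 0`, gives the exponential bound.
-/

open MeasureTheory Set intervalIntegral
open scoped Interval

noncomputable def parabolicWeight (a b t : ℝ) : ℝ := 6 * (t - a) * (b - t) / (b - a) ^ 3

section parabolicWeight

variable {a b p t : ℝ}

@[fun_prop]
theorem continuous_parabolicWeight (a b : ℝ) : Continuous (parabolicWeight a b) := by
  unfold parabolicWeight
  fun_prop

theorem parabolicWeight_nonneg (ht : t ∈ Icc a b) : 0 ≤ parabolicWeight a b t := by
  obtain ⟨hat, htb⟩ := ht
  unfold parabolicWeight
  exact div_nonneg (mul_nonneg (by linarith) (by linarith)) (pow_nonneg (by linarith) 3)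

theorem parabolicWeight_le (hab : a < b) : parabolicWeight a b t ≤ 3 / (2 * (b - a)) := by
  have hL : 0 < b - a := by linarith
  rw [parabolicWeight, div_le_div_iff₀ (by positivity) (by positivity)]
  nlinarith [sq_nonneg (a + b - 2 * t), pow_pos hL 2]

theorem hasDerivAt_parabolicWeight (a b t : ℝ) :
    HasDerivAt (parabolicWeight a b) (6 * (a + b - 2 * t) / (b - a) ^ 3) t := by
  have h := ((((hasDerivAt_id' t).sub_const a).const_mul 6).mul
    ((hasDerivAt_id' t).const_sub b)).div_const ((b - a) ^ 3)
  exact h.congr_deriv (by ring)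

theorem abs_deriv_parabolicWeight_le (hab : a < b) (ht : t ∈ Icc a b) :
    |deriv (parabolicWeight a b) t| ≤ 6 / (b - a) ^ 2 := by
  have hL : 0 < b - a := by linarith
  have hmid : |a + b - 2 * t| ≤ b - a := abs_le.mpr ⟨by linarith [ht.2], by linarith [ht.1]⟩
  rw [(hasDerivAt_parabolicWeight a b t).deriv, abs_div, abs_mul, abs_of_pos (pow_pos hL 3),
    abs_of_pos (by norm_num : (0 : ℝ) < 6), div_le_div_iff₀ (pow_pos hL 3) (pow_pos hL 2)]
  nlinarith [pow_pos hL 2]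

theorem integral_parabolicWeight (hab : a ≠ b) : ∫ t in a..b, parabolicWeight a b t = 1 := by
  have hL : b - a ≠ 0 := sub_ne_zero.mpr hab.symm
  have hP : ∀ t, HasDerivAt (fun t => (t - a) ^ 2 * (3 * b - a - 2 * t) / (b - a) ^ 3)
      (parabolicWeight a b t) t := by
    intro t
    have h := ((((hasDerivAt_id' t).sub_const a).pow 2).mul
      (((hasDerivAt_id' t).const_mul 2).const_sub (3 * b - a))).div_const ((b - a) ^ 3)
    exact h.congr_deriv (by simp only [parabolicWeight, Pi.pow_apply]; ring)
  rw [integral_eq_sub_of_hasDerivAt (fun t _ => hP t)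
    ((continuous_parabolicWeight a b).intervalIntegrable _ _)]
  field_simp
  ring

theorem abs_two_mul_parabolicWeight_sub_le (hab : a < b) (hp : p ∈ Icc a b)
    (ht : t ∈ Icc a b) :
    |2 * parabolicWeight a b t - (p - t) * deriv (parabolicWeight a b) t| ≤ 9 / (b - a) := by
  have hL : 0 < b - a := by linarith
  have hpt : |p - t| ≤ b - a := abs_le.mpr ⟨by linarith [hp.1, ht.2], by linarith [hp.2, ht.1]⟩
  calc |2 * parabolicWeight a b t - (p - t) * deriv (parabolicWeight a b) t|
      ≤ |2 * parabolicWeight a b t| + |(p - t) * deriv (parabolicWeight a b) t| := abs_sub _ _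
    _ = 2 * parabolicWeight a b t + |p - t| * |deriv (parabolicWeight a b) t| := by
        rw [abs_mul, abs_mul, abs_two, abs_of_nonneg (parabolicWeight_nonneg ht)]
    _ ≤ 2 * (3 / (2 * (b - a))) + (b - a) * (6 / (b - a) ^ 2) := by
        gcongr
        exacts [parabolicWeight_le hab, abs_deriv_parabolicWeight_le hab ht]
    _ = 9 / (b - a) := by field_simp; ring

end parabolicWeight

theorem sq_intervalIntegral_le_mul_integral_sq {f : ℝ → ℝ} {a b : ℝ} (hab : a ≤ b)
    (hf : IntervalIntegrable f volume a b)
    (hf2 : IntervalIntegrable (fun x => f x ^ 2) volume a b) :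
    (∫ x in a..b, f x) ^ 2 ≤ (b - a) * ∫ x in a..b, f x ^ 2 := by
  set I := ∫ x in a..b, f x
  set S := ∫ x in a..b, f x ^ 2
  have hexpand : ∫ x in a..b, ((b - a) * f x - I) ^ 2 = (b - a) * ((b - a) * S - I ^ 2) := by
    have hsq : ∀ x, ((b - a) * f x - I) ^ 2
        = (b - a) ^ 2 * f x ^ 2 - 2 * (b - a) * I * f x + I ^ 2 := fun x => by ring
    simp_rw [hsq]
    rw [integral_add ((hf2.const_mul _).sub (hf.const_mul _)) intervalIntegrable_const,
      integral_sub (hf2.const_mul _) (hf.const_mul _), intervalIntegral.integral_const_mul,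
      intervalIntegral.integral_const_mul, intervalIntegral.integral_const, smul_eq_mul]
    ring
  have hnonneg : 0 ≤ (b - a) * ((b - a) * S - I ^ 2) :=
    hexpand ▸ integral_nonneg hab fun x _ => sq_nonneg _
  rcases hab.eq_or_lt with rfl | hlt
  · simp [I]
  · linarith [(mul_nonneg_iff_of_pos_left (sub_pos.mpr hlt)).mp hnonneg]

section SecondOrder

variable {E : Type*} [NormedAddCommGroup E] [NormedSpace ℝ E] [CompleteSpace E]
  {ψ : ℝ → E} {a b p t M : ℝ}

theorem norm_taylor_remainder_le (hψ : ContDiff ℝ 2 ψ) (hp : p ∈ Icc a b) (ht : t ∈ Icc a b) :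
    ‖ψ p - ψ t - (p - t) • deriv ψ t‖ ≤ (b - a) * ∫ u in a..b, ‖deriv (deriv ψ) u‖ := by
  have hψ' : ContDiff ℝ 1 (deriv ψ) := hψ.deriv'
  have hψ'' : Continuous (deriv (deriv ψ)) := hψ'.continuous_deriv le_rfl
  have hderiv : ∀ u, HasDerivAt (fun u => ψ u + (p - u) • deriv ψ u)
      ((p - u) • deriv (deriv ψ) u) u := fun u => by
    have h := ((hψ.differentiable two_ne_zero u).hasDerivAt).add
      (((hasDerivAt_id' u).const_sub p).smul (hψ'.differentiable one_ne_zero u).hasDerivAt)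
    exact h.congr_deriv (by module)
  have hremainder : ψ p - ψ t - (p - t) • deriv ψ t
      = ∫ u in t..p, (p - u) • deriv (deriv ψ) u := by
    rw [integral_eq_sub_of_hasDerivAt (fun u _ => hderiv u)
      (((continuous_const.sub continuous_id).smul hψ'').intervalIntegrable _ _)]
    simp only [sub_self, zero_smul, add_zero]
    abel
  have hsub : Ι t p ⊆ Icc a b := uIoc_subset_uIcc.trans (uIcc_subset_Icc ht hp)
  have hab : a ≤ b := hp.1.trans hp.2
  have hmajorant : Continuous fun u => (b - a) * ‖deriv (deriv ψ) u‖ := by fun_prop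
  rw [hremainder]
  calc ‖∫ u in t..p, (p - u) • deriv (deriv ψ) u‖
      ≤ |∫ u in t..p, (b - a) * ‖deriv (deriv ψ) u‖| := by
        refine norm_integral_le_abs_of_norm_le ?_ (hmajorant.intervalIntegrable _ _)
        filter_upwards [ae_restrict_mem measurableSet_uIoc] with u hu
        have hu' := hsub hu
        rw [norm_smul, Real.norm_eq_abs]
        exact mul_le_mul_of_nonneg_right
          (abs_le.mpr ⟨by linarith [hu'.2, hp.1], by linarith [hu'.1, hp.2]⟩) (norm_nonneg _)
    _ ≤ |∫ u in a..b, (b - a) * ‖deriv (deriv ψ) u‖| := by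
        refine abs_integral_mono_interval ?_ ?_ (hmajorant.intervalIntegrable _ _)
        · exact uIoc_subset_uIoc_of_uIcc_subset_uIcc
            (uIcc_subset_uIcc (uIcc_of_le hab ▸ ht) (uIcc_of_le hab ▸ hp))
        · exact ae_of_all _ fun u => mul_nonneg (sub_nonneg.mpr hab) (norm_nonneg _)
    _ = (b - a) * ∫ u in a..b, ‖deriv (deriv ψ) u‖ := by
        rw [intervalIntegral.integral_const_mul, abs_of_nonneg
          (mul_nonneg (sub_nonneg.mpr hab) (integral_nonneg hab fun u _ => norm_nonneg _))]

theorem eq_integral_parabolicWeight_smul (hψ : ContDiff ℝ 2 ψ) (hab : a ≠ b) (p : ℝ) :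
    ψ p = ∫ t in a..b,
      ((2 * parabolicWeight a b t - (p - t) * deriv (parabolicWeight a b) t) • ψ t
        + parabolicWeight a b t • (ψ p - ψ t - (p - t) • deriv ψ t)) := by
  set w := parabolicWeight a b
  have hw : ∀ t, HasDerivAt w (deriv w t) t := fun t =>
    (hasDerivAt_parabolicWeight a b t).differentiableAt.hasDerivAt
  have hw' : Continuous (deriv w) := by
    rw [show deriv w = _ from funext fun t => (hasDerivAt_parabolicWeight a b t).deriv]
    fun_prop
  have hψ' : Continuous (deriv ψ) := hψ.continuous_deriv one_le_two
  -- the integrand differs from `w t • ψ p` by the derivative of `((p - t) * w t) • ψ t`,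
  -- which vanishes at both ends
  have hH : ∀ t, HasDerivAt (fun t => ((p - t) * w t) • ψ t)
      ((-w t + (p - t) * deriv w t) • ψ t + ((p - t) * w t) • deriv ψ t) t := fun t => by
    have h := (((hasDerivAt_id' t).const_sub p).mul (hw t)).smul
      (hψ.differentiable two_ne_zero t).hasDerivAt
    exact h.congr_deriv (by simp only [Pi.mul_apply]; module)
  have hboundary : ∫ t in a..b,
      ((-w t + (p - t) * deriv w t) • ψ t + ((p - t) * w t) • deriv ψ t) = 0 := by
    rw [integral_eq_sub_of_hasDerivAt (fun t _ => hH t)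
      ((by fun_prop : Continuous _).intervalIntegrable _ _)]
    simp [w, parabolicWeight]
  calc ψ p = ∫ t in a..b, w t • ψ p := by
        rw [intervalIntegral.integral_smul_const, integral_parabolicWeight hab, one_smul]
    _ = ∫ t in a..b, (w t • ψ p
          - ((-w t + (p - t) * deriv w t) • ψ t + ((p - t) * w t) • deriv ψ t)) := by
        rw [integral_sub ((by fun_prop : Continuous _).intervalIntegrable _ _)
          ((by fun_prop : Continuous _).intervalIntegrable _ _), hboundary, sub_zero]
    _ = _ := integral_congr fun t _ => by module

theorem norm_le_integral_norm_add_integral_norm_deriv_deriv (hψ : ContDiff ℝ 2 ψ) (hab : a < b)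
    (hp : p ∈ Icc a b) :
    ‖ψ p‖ ≤ 9 / (b - a) * (∫ t in a..b, ‖ψ t‖) + (b - a) * ∫ t in a..b, ‖deriv (deriv ψ) t‖ := by
  set D := (b - a) * ∫ t in a..b, ‖deriv (deriv ψ) t‖
  have hψc : Continuous ψ := hψ.continuous
  calc ‖ψ p‖ = ‖∫ t in a..b,
      ((2 * parabolicWeight a b t - (p - t) * deriv (parabolicWeight a b) t) • ψ t
        + parabolicWeight a b t • (ψ p - ψ t - (p - t) • deriv ψ t))‖ :=
        congrArg _ (eq_integral_parabolicWeight_smul hψ hab.ne p)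
    _ ≤ ∫ t in a..b, (9 / (b - a) * ‖ψ t‖ + parabolicWeight a b t * D) := by
        refine norm_integral_le_of_norm_le hab.le (ae_of_all _ fun t ht => ?_)
          ((by fun_prop : Continuous _).intervalIntegrable _ _)
        have ht' : t ∈ Icc a b := Ioc_subset_Icc_self ht
        refine (norm_add_le _ _).trans ?_
        rw [norm_smul, norm_smul, Real.norm_eq_abs, Real.norm_eq_abs,
          abs_of_nonneg (parabolicWeight_nonneg ht')]
        gcongr
        exacts [abs_two_mul_parabolicWeight_sub_le hab hp ht', parabolicWeight_nonneg ht',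
          norm_taylor_remainder_le hψ hp ht']
    _ = 9 / (b - a) * (∫ t in a..b, ‖ψ t‖) + D := by
        rw [integral_add ((by fun_prop : Continuous _).intervalIntegrable _ _)
            ((by fun_prop : Continuous _).intervalIntegrable _ _),
          intervalIntegral.integral_const_mul, intervalIntegral.integral_mul_const,
          integral_parabolicWeight hab.ne, one_mul]

theorem sq_norm_le_of_ae_norm_deriv_deriv_le (hψ : ContDiff ℝ 2 ψ) (hab : a < b)
    (hM : ∀ᵐ x ∂volume.restrict (Icc a b), ‖deriv (deriv ψ) x‖ ≤ M * ‖ψ x‖) :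
    ∀ p ∈ Icc a b,
      ‖ψ p‖ ^ 2 ≤ (9 / (b - a) + (b - a) * M) ^ 2 * (b - a) * ∫ x in Icc a b, ‖ψ x‖ ^ 2 := by
  intro p hp
  have hψc : Continuous ψ := hψ.continuous
  have hψ'' : Continuous (deriv (deriv ψ)) := hψ.deriv'.continuous_deriv le_rfl
  have hL : 0 ≤ b - a := sub_nonneg.mpr hab.le
  have hint : ∫ x in a..b, ‖deriv (deriv ψ) x‖ ≤ M * ∫ x in a..b, ‖ψ x‖ := by
    rw [← intervalIntegral.integral_const_mul]
    exact integral_mono_ae_restrict hab.le ((by fun_prop : Continuous _).intervalIntegrable _ _)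
      ((by fun_prop : Continuous _).intervalIntegrable _ _) hM
  have hnorm : ‖ψ p‖ ≤ (9 / (b - a) + (b - a) * M) * ∫ x in a..b, ‖ψ x‖ :=
    calc ‖ψ p‖
        ≤ 9 / (b - a) * (∫ x in a..b, ‖ψ x‖) + (b - a) * ∫ x in a..b, ‖deriv (deriv ψ) x‖ :=
          norm_le_integral_norm_add_integral_norm_deriv_deriv hψ hab hp
      _ ≤ 9 / (b - a) * (∫ x in a..b, ‖ψ x‖) + (b - a) * (M * ∫ x in a..b, ‖ψ x‖) := by gcongr
      _ = (9 / (b - a) + (b - a) * M) * ∫ x in a..b, ‖ψ x‖ := by ring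
  have hCS := sq_intervalIntegral_le_mul_integral_sq hab.le
    ((by fun_prop : Continuous fun x => ‖ψ x‖).intervalIntegrable _ _)
    ((by fun_prop : Continuous fun x => ‖ψ x‖ ^ 2).intervalIntegrable _ _)
  rw [integral_Icc_eq_integral_Ioc, ← intervalIntegral.integral_of_le hab.le]
  calc ‖ψ p‖ ^ 2 ≤ ((9 / (b - a) + (b - a) * M) * ∫ x in a..b, ‖ψ x‖) ^ 2 :=
        pow_le_pow_left₀ (norm_nonneg _) hnorm 2
    _ ≤ (9 / (b - a) + (b - a) * M) ^ 2 * ((b - a) * ∫ x in a..b, ‖ψ x‖ ^ 2) := by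
        rw [mul_pow]; gcongr
    _ = _ := by ring

theorem hasDerivAt_integral_Icc_sub_add {g : ℝ → E} (hg : Continuous g) {r : ℝ} (hr : 0 ≤ r)
    (c y : ℝ) :
    HasDerivAt (fun y => ∫ x in Icc (c + y - r) (c + y + r), g x)
      (g (c + y + r) - g (c + y - r)) y := by
  have hprimitive : (fun y => ∫ x in Icc (c + y - r) (c + y + r), g x)
      = fun y => (∫ x in 0..c + y + r, g x) - ∫ x in 0..c + y - r, g x := funext fun y => by
    rw [integral_interval_sub_left (hg.intervalIntegrable _ _) (hg.intervalIntegrable _ _),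
      integral_of_le (by linarith), integral_Icc_eq_integral_Ioc]
  have hright := (hg.integral_hasStrictDerivAt 0 _).hasDerivAt.scomp y
    (((hasDerivAt_id' y).const_add c).add_const r)
  have hleft := (hg.integral_hasStrictDerivAt 0 _).hasDerivAt.scomp y
    (((hasDerivAt_id' y).const_add c).sub_const r)
  rw [hprimitive]
  have h := hright.sub hleft
  rw [one_smul, one_smul] at h
  exact h

end SecondOrder

theorem le_exp_mul_of_deriv_le {f f' : ℝ → ℝ} {K y : ℝ} (hy : 0 ≤ y)
    (hf : ∀ x ∈ Icc 0 y, HasDerivAt f (f' x) x) (bound : ∀ x ∈ Icc 0 y, f' x ≤ K * f x) :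
    f y ≤ Real.exp (K * y) * f 0 := by
  have h := le_gronwallBound_of_liminf_deriv_right_le (δ := f 0) (ε := 0)
    (fun x hx => (hf x hx).continuousAt.continuousWithinAt)
    (fun x hx _ hr => (hf x (Ico_subset_Icc_self hx)).hasDerivWithinAt.liminf_right_slope_le hr)
    le_rfl (fun x hx => by simpa using bound x (Ico_subset_Icc_self hx)) y ⟨hy, le_rfl⟩
  rwa [gronwallBound_ε0, sub_zero, mul_comm] at h

theorem le_exp_mul_abs_of_abs_deriv_le {f f' : ℝ → ℝ} {K y : ℝ}
    (hf : ∀ x ∈ uIcc 0 y, HasDerivAt f (f' x) x) (bound : ∀ x ∈ uIcc 0 y, |f' x| ≤ K * f x) :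
    f y ≤ Real.exp (K * |y|) * f 0 := by
  rcases le_total 0 y with hy | hy
  · rw [uIcc_of_le hy] at hf bound
    rw [abs_of_nonneg hy]
    exact le_exp_mul_of_deriv_le hy hf fun x hx => (le_abs_self _).trans (bound x hx)
  · rw [uIcc_of_ge hy] at hf bound
    have hmem : ∀ x ∈ Icc 0 (-y), -x ∈ Icc y 0 := fun x hx =>
      ⟨by linarith [hx.2], by linarith [hx.1]⟩
    have h := le_exp_mul_of_deriv_le (f := fun x => f (-x)) (f' := fun x => -f' (-x))
      (neg_nonneg.mpr hy)
      (fun x hx => by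
        have h := (hf (-x) (hmem x hx)).scomp x (hasDerivAt_neg x)
        rwa [neg_one_smul] at h)
      (fun x hx => (neg_le_abs _).trans (bound (-x) (hmem x hx)))
    simpa [abs_of_nonpos hy] using h

theorem ae_norm_deriv_deriv_le_of_schrodinger {S : Set ℝ} {V : ℝ → ℝ} {E M : ℝ} {ψ : ℝ → ℂ}
    (hS : MeasurableSet S) (hV : ∀ᵐ x ∂volume.restrict S, |V x - E| ≤ M)
    (hψ : ∀ x ∈ S, -(deriv (deriv ψ) x) + (V x : ℂ) * ψ x = (E : ℂ) * ψ x) :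
    ∀ᵐ x ∂volume.restrict S, ‖deriv (deriv ψ) x‖ ≤ M * ‖ψ x‖ := by
  filter_upwards [hV, ae_restrict_mem hS] with x hVx hx
  have hψ'' : deriv (deriv ψ) x = ((V x - E : ℝ) : ℂ) * ψ x := by
    push_cast
    linear_combination -(hψ x hx)
  rw [hψ'', norm_mul, Complex.norm_real, Real.norm_eq_abs]
  gcongr

/-- Differential inequality and Gronwall estimate for the translated `L²` mass of an
eigenfunction: for every `M > 0` and `s ∈ (0,1]` there is `C₆ > 0` (depending only on `M`
and `s`) such that for every interval `J`, potential `V` with `|V - E| ≤ M` a.e. on `J`,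
`C²` eigenfunction `ψ` of `-ψ'' + Vψ = Eψ` on `J`, and every `k`, the function
`φ(y) = ∫_{Λ_s(k+y)} |ψ|²` satisfies `|φ'(y)| ≤ C₆ φ(y)` whenever `Λ_s(k+y) ⊆ J`, and
`φ(y) ≤ exp(C₆|y|) φ(0)` whenever `Λ_s(k+y') ⊆ J` for all `y'` between `0` and `y`. -/
theorem mass_differential_inequality_and_gronwall
    (M : ℝ) (hM : 0 < M) (s : ℝ) (hs : s ∈ Set.Ioc (0 : ℝ) 1) :
    ∃ C₆ : ℝ, 0 < C₆ ∧
      ∀ (J : Set ℝ), J.OrdConnected →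
      ∀ (V : ℝ → ℝ), Measurable V →
      ∀ (E : ℝ), (∀ᵐ x ∂(volume.restrict J), |V x - E| ≤ M) →
      ∀ (ψ : ℝ → ℂ), ContDiff ℝ 2 ψ →
      (∀ x ∈ J, -(deriv (deriv ψ) x) + (V x : ℂ) * ψ x = (E : ℂ) * ψ x) →
      ∀ (k : ℝ) (φ : ℝ → ℝ),
        (∀ y, φ y = ∫ x in Set.Icc (k + y - s/2) (k + y + s/2), ‖ψ x‖ ^ 2) →
        (∀ y, Set.Icc (k + y - s/2) (k + y + s/2) ⊆ J → |deriv φ y| ≤ C₆ * φ y) ∧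
        (∀ y, (∀ y' ∈ Set.uIcc 0 y, Set.Icc (k + y' - s/2) (k + y' + s/2) ⊆ J) →
          φ y ≤ Real.exp (C₆ * |y|) * φ 0) := by
  have hs0 : 0 < s := hs.1
  refine ⟨(9 / s + s * M) ^ 2 * s, by positivity, ?_⟩
  intro J _ V _ E hVE ψ hψ hψJ k φ hφ
  have hψc : Continuous fun x => ‖ψ x‖ ^ 2 := by have := hψ.continuous; fun_prop
  have hφ' : ∀ y, HasDerivAt φ (‖ψ (k + y + s / 2)‖ ^ 2 - ‖ψ (k + y - s / 2)‖ ^ 2) y := by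
    rw [funext hφ]
    exact hasDerivAt_integral_Icc_sub_add hψc (by positivity) k
  have hbound : ∀ y, Icc (k + y - s / 2) (k + y + s / 2) ⊆ J →
      |deriv φ y| ≤ (9 / s + s * M) ^ 2 * s * φ y := by
    intro y hJ
    have hlt : k + y - s / 2 < k + y + s / 2 := by linarith
    have hendpoint := sq_norm_le_of_ae_norm_deriv_deriv_le hψ hlt
      (ae_norm_deriv_deriv_le_of_schrodinger measurableSet_Icc
        (ae_restrict_of_ae_restrict_of_subset hJ hVE) fun x hx => hψJ x (hJ hx))
    rw [show k + y + s / 2 - (k + y - s / 2) = s by ring, ← hφ y] at hendpoint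
    rw [(hφ' y).deriv]
    exact abs_sub_le_of_nonneg_of_le (sq_nonneg _) (hendpoint _ (right_mem_Icc.mpr hlt.le))
      (sq_nonneg _) (hendpoint _ (left_mem_Icc.mpr hlt.le))
  exact ⟨hbound, fun y hy => le_exp_mul_abs_of_abs_deriv_le (fun x _ => hφ' x)
    fun x hx => (hφ' x).deriv ▸ hbound x (hy x hx)⟩
end
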